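/- arXiv:2304.06324 — 3 statements merged into one kernel-verified Lean document; each statement's English description precedes it below -/
import Mathlib

section
/- Let (ρ,μ) be an action of a Lie-Yamaguti algebra (g,[·,·]_g,{{·,·,·}}_g) on a Lie-Yamaguti algebra (h,[·,·]_h,{{·,·,·}}_h). Then the direct sum g ⊕ h with operations [x+u, y+v] := [x,y]_g + ρ(x)v − ρ(y)u + [u,v]_h and {{x+u, y+v, z+w}} := {{x,y,z}}_g + D(x,y)w + μ(y,z)u − μ(x,z)v + {{u,v,w}}_h is a Lie-Yamaguti algebra (the semidirect product). -/
/-- A Lie-Yamaguti algebra structure on a `K`-module `V`, given by a bilinear bracket `br`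
and a trilinear bracket `tr`. -/
structure IsLYA (K : Type*) [Field K] (V : Type*) [AddCommGroup V] [Module K V]
    (br : V → V → V) (tr : V → V → V → V) : Prop where
  br_add_left : ∀ x y z : V, br (x + y) z = br x z + br y z
  br_smul_left : ∀ (a : K) (x y : V), br (a • x) y = a • br x y
  br_add_right : ∀ x y z : V, br x (y + z) = br x y + br x z
  br_smul_right : ∀ (a : K) (x y : V), br x (a • y) = a • br x y
  tr_add1 : ∀ x x' y z : V, tr (x + x') y z = tr x y z + tr x' y z
  tr_smul1 : ∀ (a : K) (x y z : V), tr (a • x) y z = a • tr x y z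
  tr_add2 : ∀ x y y' z : V, tr x (y + y') z = tr x y z + tr x y' z
  tr_smul2 : ∀ (a : K) (x y z : V), tr x (a • y) z = a • tr x y z
  tr_add3 : ∀ x y z z' : V, tr x y (z + z') = tr x y z + tr x y z'
  tr_smul3 : ∀ (a : K) (x y z : V), tr x y (a • z) = a • tr x y z
  br_skew : ∀ x y : V, br x y = - br y x
  tr_skew : ∀ x y z : V, tr x y z = - tr y x z
  ly1 : ∀ x y z : V,
    br (br x y) z + br (br y z) x + br (br z x) y + tr x y z + tr y z x + tr z x y = 0
  ly2 : ∀ x y z w : V, tr (br x y) z w + tr (br y z) x w + tr (br z x) y w = 0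
  ly3 : ∀ x y z w : V, tr x y (br z w) = br (tr x y z) w + br z (tr x y w)
  ly4 : ∀ x y z w t : V,
    tr x y (tr z w t) = tr (tr x y z) w t + tr z (tr x y w) t + tr z w (tr x y t)

/-- `D(x,y) = μ(y,x) - μ(x,y) + [ρ(x),ρ(y)] - ρ([x,y])`. -/
def Dmap {g V : Type*} [AddCommGroup V] (br : g → g → g)
    (ρ : g → V → V) (μ : g → g → V → V) (x y : g) (v : V) : V :=
  μ y x v - μ x y v + (ρ x (ρ y v) - ρ y (ρ x v)) - ρ (br x y) v

/-- A representation of a Lie-Yamaguti algebra `(g, br, tr)` on a `K`-module `V`. -/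
structure IsLYRep (K : Type*) [Field K] (g : Type*) [AddCommGroup g] [Module K g]
    (V : Type*) [AddCommGroup V] [Module K V]
    (br : g → g → g) (tr : g → g → g → g)
    (ρ : g → V → V) (μ : g → g → V → V) : Prop where
  ρ_add : ∀ (x y : g) (v : V), ρ (x + y) v = ρ x v + ρ y v
  ρ_smul : ∀ (a : K) (x : g) (v : V), ρ (a • x) v = a • ρ x v
  ρ_addv : ∀ (x : g) (u v : V), ρ x (u + v) = ρ x u + ρ x v
  ρ_smulv : ∀ (x : g) (a : K) (v : V), ρ x (a • v) = a • ρ x v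
  μ_add1 : ∀ (x y z : g) (v : V), μ (x + y) z v = μ x z v + μ y z v
  μ_smul1 : ∀ (a : K) (x y : g) (v : V), μ (a • x) y v = a • μ x y v
  μ_add2 : ∀ (x y z : g) (v : V), μ x (y + z) v = μ x y v + μ x z v
  μ_smul2 : ∀ (a : K) (x y : g) (v : V), μ x (a • y) v = a • μ x y v
  μ_addv : ∀ (x y : g) (u v : V), μ x y (u + v) = μ x y u + μ x y v
  μ_smulv : ∀ (x y : g) (a : K) (v : V), μ x y (a • v) = a • μ x y v
  rep1 : ∀ (x y z : g) (v : V), μ (br x y) z v - μ x z (ρ y v) + μ y z (ρ x v) = 0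
  rep2 : ∀ (x y z : g) (v : V), μ x (br y z) v - ρ y (μ x z v) + ρ z (μ x y v) = 0
  rep3 : ∀ (x y z : g) (v : V),
    ρ (tr x y z) v = Dmap br ρ μ x y (ρ z v) - ρ z (Dmap br ρ μ x y v)
  rep4 : ∀ (x y z w : g) (v : V),
    μ z w (μ x y v) - μ y w (μ x z v) - μ x (tr y z w) v + Dmap br ρ μ y z (μ x w v) = 0
  rep5 : ∀ (x y z w : g) (v : V),
    μ (tr x y z) w v + μ z (tr x y w) v
      = Dmap br ρ μ x y (μ z w v) - μ z w (Dmap br ρ μ x y v)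

/-- An action of a Lie-Yamaguti algebra `(g, brg, trg)` on a Lie-Yamaguti algebra
`(h, brh, trh)`: a representation valued in central elements annihilating all brackets. -/
structure IsLYAction (K : Type*) [Field K] (g : Type*) [AddCommGroup g] [Module K g]
    (h : Type*) [AddCommGroup h] [Module K h]
    (brg : g → g → g) (trg : g → g → g → g)
    (brh : h → h → h) (trh : h → h → h → h)
    (ρ : g → h → h) (μ : g → g → h → h) : Prop where
  rep : IsLYRep K g h brg trg ρ μ
  ρ_cent_br : ∀ (x : g) (u v : h), brh (ρ x u) v = 0
  ρ_cent_tr1 : ∀ (x : g) (u v w : h), trh (ρ x u) v w = 0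
  ρ_cent_tr3 : ∀ (x : g) (u v w : h), trh v w (ρ x u) = 0
  μ_cent_br : ∀ (x y : g) (u v : h), brh (μ x y u) v = 0
  μ_cent_tr1 : ∀ (x y : g) (u v w : h), trh (μ x y u) v w = 0
  μ_cent_tr3 : ∀ (x y : g) (u v w : h), trh v w (μ x y u) = 0
  ρ_ann_br : ∀ (x : g) (u v : h), ρ x (brh u v) = 0
  ρ_ann_tr : ∀ (x : g) (u v w : h), ρ x (trh u v w) = 0
  μ_ann_br : ∀ (x y : g) (u v : h), μ x y (brh u v) = 0
  μ_ann_tr : ∀ (x y : g) (u v w : h), μ x y (trh u v w) = 0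

/-- Relative Rota-Baxter operator of weight 1 from `(h, brh, trh)` to `(g, brg, trg)`
with respect to the action `(ρ, μ)`. -/
def IsRelRB (K : Type*) [Field K] {g h : Type*} [AddCommGroup g] [Module K g]
    [AddCommGroup h] [Module K h]
    (brg : g → g → g) (trg : g → g → g → g)
    (brh : h → h → h) (trh : h → h → h → h)
    (ρ : g → h → h) (μ : g → g → h → h) (T : h →ₗ[K] g) : Prop :=
  (∀ u v : h, brg (T u) (T v) = T (ρ (T u) v - ρ (T v) u + brh u v)) ∧
  (∀ u v w : h, trg (T u) (T v) (T w)
    = T (Dmap brg ρ μ (T u) (T v) w + μ (T v) (T w) u - μ (T u) (T w) v + trh u v w))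

/-- Binary bracket of the semidirect product Lie-Yamaguti algebra `g ⋉ h`. -/
def sdBr {g h : Type*} [AddCommGroup g] [AddCommGroup h]
    (brg : g → g → g) (brh : h → h → h) (ρ : g → h → h) (p q : g × h) : g × h :=
  (brg p.1 q.1, ρ p.1 q.2 - ρ q.1 p.2 + brh p.2 q.2)

/-- Ternary bracket of the semidirect product Lie-Yamaguti algebra `g ⋉ h`. -/
def sdTr {g h : Type*} [AddCommGroup g] [AddCommGroup h]
    (brg : g → g → g) (trg : g → g → g → g) (trh : h → h → h → h)
    (ρ : g → h → h) (μ : g → g → h → h) (p q r : g × h) : g × h :=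
  (trg p.1 q.1 r.1,
    Dmap brg ρ μ p.1 q.1 r.2 + μ q.1 r.1 p.2 - μ p.1 r.1 q.2 + trh p.2 q.2 r.2)

/-- Nijenhuis operator on a Lie-Yamaguti algebra. -/
def IsNijenhuis {V : Type*} [AddCommGroup V]
    (br : V → V → V) (tr : V → V → V → V) (N : V → V) : Prop :=
  (∀ x y : V, br (N x) (N y) = N (br (N x) y + br x (N y) - N (br x y))) ∧
  (∀ x y z : V, tr (N x) (N y) (N z)
    = N (tr (N x) (N y) z + tr (N x) y (N z) + tr x (N y) (N z)
      - N (tr (N x) y z) - N (tr x (N y) z) - N (tr x y (N z)) + N (N (tr x y z))))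

/-- The associator `(x,y,z) = (x*y)*z - x*(y*z)`. -/
def postAssoc {V : Type*} [AddCommGroup V] (star : V → V → V) (x y z : V) : V :=
  star (star x y) z - star x (star y z)

/-- The sub-adjacent binary bracket `[x,y]_C = x*y - y*x + x·y`. -/
def postSubBr {V : Type*} [AddCommGroup V] (dot star : V → V → V) (x y : V) : V :=
  star x y - star y x + dot x y

/-- `{x,y,z}_D = {z,y,x} - {z,x,y} + (y,x,z) - (x,y,z) - (x·y)*z`. -/
def postDbr {V : Type*} [AddCommGroup V] (dot star : V → V → V)
    (curly : V → V → V → V) (x y z : V) : V :=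
  curly z y x - curly z x y + postAssoc star y x z - postAssoc star x y z
    - star (dot x y) z

/-- The sub-adjacent ternary bracket
`{{x,y,z}}_C = {x,y,z}_D + {x,y,z} - {y,x,z} + ⟨x,y,z⟩`. -/
def postSubTr {V : Type*} [AddCommGroup V] (dot star : V → V → V)
    (curly ang : V → V → V → V) (x y z : V) : V :=
  postDbr dot star curly x y z + curly x y z - curly y x z + ang x y z

/-- A post-Lie-Yamaguti algebra structure `(A, ·, *, {·,·,·}, ⟨·,·,·⟩)`. -/
structure IsPostLYA (K : Type*) [Field K] (V : Type*) [AddCommGroup V] [Module K V]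
    (dot star : V → V → V) (curly ang : V → V → V → V) : Prop where
  lya : IsLYA K V dot ang
  star_add_left : ∀ x y z : V, star (x + y) z = star x z + star y z
  star_smul_left : ∀ (a : K) (x y : V), star (a • x) y = a • star x y
  star_add_right : ∀ x y z : V, star x (y + z) = star x y + star x z
  star_smul_right : ∀ (a : K) (x y : V), star x (a • y) = a • star x y
  curly_add1 : ∀ x x' y z : V, curly (x + x') y z = curly x y z + curly x' y z
  curly_smul1 : ∀ (a : K) (x y z : V), curly (a • x) y z = a • curly x y z
  curly_add2 : ∀ x y y' z : V, curly x (y + y') z = curly x y z + curly x y' z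
  curly_smul2 : ∀ (a : K) (x y z : V), curly x (a • y) z = a • curly x y z
  curly_add3 : ∀ x y z z' : V, curly x y (z + z') = curly x y z + curly x y z'
  curly_smul3 : ∀ (a : K) (x y z : V), curly x y (a • z) = a • curly x y z
  post1 : ∀ x y z w : V,
    curly z (postSubBr dot star x y) w = curly (star y z) x w - curly (star x z) y w
  post2 : ∀ x y z w : V,
    curly x y (postSubBr dot star z w) = star z (curly x y w) - star w (curly x y z)
  post3 : ∀ x y z w : V,
    star (postSubTr dot star curly ang x y z) w
      = postDbr dot star curly x y (star z w) - star z (postDbr dot star curly x y w)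
  post4 : ∀ x y z w t : V,
    curly x y (postSubTr dot star curly ang z w t)
      = curly (curly x y z) w t - curly (curly x y w) z t
        + curly z w (postDbr dot star curly x y t)
  post5 : ∀ x y z w t : V,
    curly x y (postDbr dot star curly z w t)
      = curly (postDbr dot star curly x y z) w t
        + curly z (postSubTr dot star curly ang x y w) t
        + curly z w (postSubTr dot star curly ang x y t)
  post6a : ∀ x y z : V, dot (star x y) z = 0
  post6b : ∀ x y z w : V, ang (star x y) z w = 0
  post6c : ∀ x y z w : V, ang z w (star x y) = 0
  post7a : ∀ x y z : V, star x (dot y z) = 0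
  post7b : ∀ x y z w : V, curly (dot x y) z w = 0
  post8a : ∀ x z w t : V, star x (ang z w t) = 0
  post8b : ∀ x y z w t : V, curly (ang z w t) x y = 0

/-- The descent binary bracket `[u,v]_T = ρ(Tu)v - ρ(Tv)u + [u,v]_h`. -/
def brT {K : Type*} [Field K] {g h : Type*} [AddCommGroup g] [Module K g]
    [AddCommGroup h] [Module K h]
    (brh : h → h → h) (ρ : g → h → h) (T : h →ₗ[K] g) (u v : h) : h :=
  ρ (T u) v - ρ (T v) u + brh u v

/-- The descent ternary bracket
`{{u,v,w}}_T = D(Tu,Tv)w + μ(Tv,Tw)u - μ(Tu,Tw)v + {{u,v,w}}_h`. -/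
def trT {K : Type*} [Field K] {g h : Type*} [AddCommGroup g] [Module K g]
    [AddCommGroup h] [Module K h]
    (brg : g → g → g) (trh : h → h → h → h)
    (ρ : g → h → h) (μ : g → g → h → h) (T : h →ₗ[K] g) (u v w : h) : h :=
  Dmap brg ρ μ (T u) (T v) w + μ (T v) (T w) u - μ (T u) (T w) v + trh u v w

/-- `ρ_T(u)(x) = [Tu, x]_g + T(ρ(x)u)`. -/
def rhoT {K : Type*} [Field K] {g h : Type*} [AddCommGroup g] [Module K g]
    [AddCommGroup h] [Module K h]
    (brg : g → g → g) (ρ : g → h → h) (T : h →ₗ[K] g) (u : h) (x : g) : g :=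
  brg (T u) x + T (ρ x u)

/-- `μ_T(u,v)(x) = {{x,Tu,Tv}}_g - T(D(x,Tu)v - μ(x,Tv)u)`. -/
def muT {K : Type*} [Field K] {g h : Type*} [AddCommGroup g] [Module K g]
    [AddCommGroup h] [Module K h]
    (brg : g → g → g) (trg : g → g → g → g)
    (ρ : g → h → h) (μ : g → g → h → h) (T : h →ₗ[K] g) (u v : h) (x : g) : g :=
  trg x (T u) (T v) - T (Dmap brg ρ μ x (T u) v - μ x (T v) u)

/-- `D_T(u,v)(x) = {{Tu,Tv,x}}_g - T(μ(Tv,x)u - μ(Tu,x)v)`. -/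
def DT {K : Type*} [Field K] {g h : Type*} [AddCommGroup g] [Module K g]
    [AddCommGroup h] [Module K h]
    (trg : g → g → g → g) (μ : g → g → h → h) (T : h →ₗ[K] g) (u v : h) (x : g) : g :=
  trg (T u) (T v) x - T (μ (T v) x u - μ (T u) x v)

/-! The `g`-component of each axiom for `g ⋉ h` is the same axiom for `g`. In the
`h`-component, the images of `ρ` and `μ` are central and annihilate the brackets of `h`, so every
mixed term of a composite bracket vanishes: what survives is a pure `h`-term plus terms built from
`ρ`, `μ` and `D` alone. Each axiom then reduces to the same axiom for `h` plus a linear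
combination of the representation identities of `(ρ, μ)`. -/

section

variable {K : Type*} [Field K]

namespace IsLYA

variable {V : Type*} [AddCommGroup V] [Module K V] {br : V → V → V} {tr : V → V → V → V}

theorem br_sub_left (hV : IsLYA K V br tr) (x y z : V) : br (x - y) z = br x z - br y z :=
  map_sub (AddMonoidHom.mk' (br · z) (hV.br_add_left · · z)) x y

theorem br_sub_right (hV : IsLYA K V br tr) (x y z : V) : br x (y - z) = br x y - br x z :=
  map_sub (AddMonoidHom.mk' (br x) (hV.br_add_right x)) y z

theorem tr_sub1 (hV : IsLYA K V br tr) (x x' y z : V) : tr (x - x') y z = tr x y z - tr x' y z :=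
  map_sub (AddMonoidHom.mk' (tr · y z) (hV.tr_add1 · · y z)) x x'

theorem tr_sub2 (hV : IsLYA K V br tr) (x y y' z : V) : tr x (y - y') z = tr x y z - tr x y' z :=
  map_sub (AddMonoidHom.mk' (tr x · z) (hV.tr_add2 x · · z)) y y'

theorem tr_sub3 (hV : IsLYA K V br tr) (x y z z' : V) : tr x y (z - z') = tr x y z - tr x y z' :=
  map_sub (AddMonoidHom.mk' (tr x y) (hV.tr_add3 x y)) z z'

end IsLYA

namespace IsLYRep

variable {g V : Type*} [AddCommGroup g] [Module K g] [AddCommGroup V] [Module K V]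
  {br : g → g → g} {tr : g → g → g → g} {ρ : g → V → V} {μ : g → g → V → V}

theorem ρ_zero (hρ : IsLYRep K g V br tr ρ μ) (v : V) : ρ 0 v = 0 :=
  map_zero (AddMonoidHom.mk' (ρ · v) (hρ.ρ_add · · v))

theorem ρ_neg (hρ : IsLYRep K g V br tr ρ μ) (x : g) (v : V) : ρ (-x) v = -ρ x v :=
  map_neg (AddMonoidHom.mk' (ρ · v) (hρ.ρ_add · · v)) x

theorem ρ_zerov (hρ : IsLYRep K g V br tr ρ μ) (x : g) : ρ x 0 = 0 :=
  map_zero (AddMonoidHom.mk' (ρ x) (hρ.ρ_addv x))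

theorem ρ_subv (hρ : IsLYRep K g V br tr ρ μ) (x : g) (u v : V) : ρ x (u - v) = ρ x u - ρ x v :=
  map_sub (AddMonoidHom.mk' (ρ x) (hρ.ρ_addv x)) u v

theorem μ_subv (hρ : IsLYRep K g V br tr ρ μ) (x y : g) (u v : V) :
    μ x y (u - v) = μ x y u - μ x y v :=
  map_sub (AddMonoidHom.mk' (μ x y) (hρ.μ_addv x y)) u v

theorem dmap_add (hρ : IsLYRep K g V br tr ρ μ) (x y : g) (u v : V) :
    Dmap br ρ μ x y (u + v) = Dmap br ρ μ x y u + Dmap br ρ μ x y v := by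
  simp only [Dmap, hρ.μ_addv, hρ.ρ_addv]
  abel

theorem dmap_sub (hρ : IsLYRep K g V br tr ρ μ) (x y : g) (u v : V) :
    Dmap br ρ μ x y (u - v) = Dmap br ρ μ x y u - Dmap br ρ μ x y v :=
  map_sub (AddMonoidHom.mk' (Dmap br ρ μ x y) (hρ.dmap_add x y)) u v

theorem dmap_smul (hρ : IsLYRep K g V br tr ρ μ) (x y : g) (a : K) (v : V) :
    Dmap br ρ μ x y (a • v) = a • Dmap br ρ μ x y v := by
  simp only [Dmap, hρ.μ_smulv, hρ.ρ_smulv, smul_sub, smul_add]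

theorem dmap_swap (hρ : IsLYRep K g V br tr ρ μ) (hg : IsLYA K g br tr) (x y : g) (v : V) :
    Dmap br ρ μ y x v = -Dmap br ρ μ x y v := by
  simp only [Dmap, hg.br_skew y x, hρ.ρ_neg]
  abel

theorem dmap_add_left (hρ : IsLYRep K g V br tr ρ μ) (hg : IsLYA K g br tr) (x x' y : g) (v : V) :
    Dmap br ρ μ (x + x') y v = Dmap br ρ μ x y v + Dmap br ρ μ x' y v := by
  simp only [Dmap, hρ.μ_add1, hρ.μ_add2, hρ.ρ_add, hρ.ρ_addv, hg.br_add_left]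
  abel

theorem dmap_add_right (hρ : IsLYRep K g V br tr ρ μ) (hg : IsLYA K g br tr) (x y y' : g) (v : V) :
    Dmap br ρ μ x (y + y') v = Dmap br ρ μ x y v + Dmap br ρ μ x y' v := by
  simp only [Dmap, hρ.μ_add1, hρ.μ_add2, hρ.ρ_add, hρ.ρ_addv, hg.br_add_right]
  abel

theorem dmap_smul_left (hρ : IsLYRep K g V br tr ρ μ) (hg : IsLYA K g br tr) (a : K) (x y : g)
    (v : V) : Dmap br ρ μ (a • x) y v = a • Dmap br ρ μ x y v := by
  simp only [Dmap, hρ.μ_smul1, hρ.μ_smul2, hρ.ρ_smul, hρ.ρ_smulv, hg.br_smul_left, smul_sub,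
    smul_add]

theorem dmap_smul_right (hρ : IsLYRep K g V br tr ρ μ) (hg : IsLYA K g br tr) (a : K) (x y : g)
    (v : V) : Dmap br ρ μ x (a • y) v = a • Dmap br ρ μ x y v := by
  simp only [Dmap, hρ.μ_smul1, hρ.μ_smul2, hρ.ρ_smul, hρ.ρ_smulv, hg.br_smul_right, smul_sub,
    smul_add]

end IsLYRep

namespace IsLYAction

variable {g h : Type*} [AddCommGroup g] [Module K g] [AddCommGroup h] [Module K h]
  {brg : g → g → g} {trg : g → g → g → g} {brh : h → h → h} {trh : h → h → h → h}
  {ρ : g → h → h} {μ : g → g → h → h}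

theorem ρ_cent_br_right (hh : IsLYA K h brh trh) (hact : IsLYAction K g h brg trg brh trh ρ μ)
    (x : g) (u v : h) : brh v (ρ x u) = 0 := by
  rw [hh.br_skew, hact.ρ_cent_br, neg_zero]

theorem μ_cent_br_right (hh : IsLYA K h brh trh) (hact : IsLYAction K g h brg trg brh trh ρ μ)
    (x y : g) (u v : h) : brh v (μ x y u) = 0 := by
  rw [hh.br_skew, hact.μ_cent_br, neg_zero]

theorem ρ_cent_tr2 (hh : IsLYA K h brh trh) (hact : IsLYAction K g h brg trg brh trh ρ μ)
    (x : g) (u v w : h) : trh v (ρ x u) w = 0 := by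
  rw [hh.tr_skew, hact.ρ_cent_tr1, neg_zero]

theorem μ_cent_tr2 (hh : IsLYA K h brh trh) (hact : IsLYAction K g h brg trg brh trh ρ μ)
    (x y : g) (u v w : h) : trh v (μ x y u) w = 0 := by
  rw [hh.tr_skew, hact.μ_cent_tr1, neg_zero]

theorem dmap_ann_br (hact : IsLYAction K g h brg trg brh trh ρ μ) (x y : g) (u v : h) :
    Dmap brg ρ μ x y (brh u v) = 0 := by
  simp only [Dmap, hact.μ_ann_br, hact.ρ_ann_br, hact.rep.ρ_zerov, sub_self, add_zero]

end IsLYAction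

section Semidirect

variable {g h : Type*} [AddCommGroup g] [Module K g] [AddCommGroup h] [Module K h]
  {brg : g → g → g} {trg : g → g → g → g} {brh : h → h → h} {trh : h → h → h → h}
  {ρ : g → h → h} {μ : g → g → h → h}

theorem sdBr_add_left (hg : IsLYA K g brg trg) (hh : IsLYA K h brh trh)
    (hρ : IsLYRep K g h brg trg ρ μ) (p q r : g × h) :
    sdBr brg brh ρ (p + q) r = sdBr brg brh ρ p r + sdBr brg brh ρ q r := by
  refine Prod.ext (hg.br_add_left _ _ _) ?_
  simp only [sdBr, Prod.fst_add, Prod.snd_add, hρ.ρ_add, hρ.ρ_addv, hh.br_add_left]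
  abel

theorem sdBr_add_right (hg : IsLYA K g brg trg) (hh : IsLYA K h brh trh)
    (hρ : IsLYRep K g h brg trg ρ μ) (p q r : g × h) :
    sdBr brg brh ρ p (q + r) = sdBr brg brh ρ p q + sdBr brg brh ρ p r := by
  refine Prod.ext (hg.br_add_right _ _ _) ?_
  simp only [sdBr, Prod.fst_add, Prod.snd_add, hρ.ρ_add, hρ.ρ_addv, hh.br_add_right]
  abel

theorem sdBr_smul_left (hg : IsLYA K g brg trg) (hh : IsLYA K h brh trh)
    (hρ : IsLYRep K g h brg trg ρ μ) (a : K) (p q : g × h) :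
    sdBr brg brh ρ (a • p) q = a • sdBr brg brh ρ p q := by
  refine Prod.ext (hg.br_smul_left _ _ _) ?_
  simp only [sdBr, Prod.smul_fst, Prod.smul_snd, hρ.ρ_smul, hρ.ρ_smulv, hh.br_smul_left,
    smul_add, smul_sub]

theorem sdBr_smul_right (hg : IsLYA K g brg trg) (hh : IsLYA K h brh trh)
    (hρ : IsLYRep K g h brg trg ρ μ) (a : K) (p q : g × h) :
    sdBr brg brh ρ p (a • q) = a • sdBr brg brh ρ p q := by
  refine Prod.ext (hg.br_smul_right _ _ _) ?_
  simp only [sdBr, Prod.smul_fst, Prod.smul_snd, hρ.ρ_smul, hρ.ρ_smulv, hh.br_smul_right,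
    smul_add, smul_sub]

theorem sdTr_add1 (hg : IsLYA K g brg trg) (hh : IsLYA K h brh trh)
    (hρ : IsLYRep K g h brg trg ρ μ) (p p' q r : g × h) :
    sdTr brg trg trh ρ μ (p + p') q r
      = sdTr brg trg trh ρ μ p q r + sdTr brg trg trh ρ μ p' q r := by
  refine Prod.ext (hg.tr_add1 _ _ _ _) ?_
  simp only [sdTr, Prod.fst_add, Prod.snd_add, hρ.dmap_add_left hg, hρ.μ_add1, hρ.μ_addv,
    hh.tr_add1]
  abel

theorem sdTr_add2 (hg : IsLYA K g brg trg) (hh : IsLYA K h brh trh)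
    (hρ : IsLYRep K g h brg trg ρ μ) (p q q' r : g × h) :
    sdTr brg trg trh ρ μ p (q + q') r
      = sdTr brg trg trh ρ μ p q r + sdTr brg trg trh ρ μ p q' r := by
  refine Prod.ext (hg.tr_add2 _ _ _ _) ?_
  simp only [sdTr, Prod.fst_add, Prod.snd_add, hρ.dmap_add_right hg, hρ.μ_add1, hρ.μ_addv,
    hh.tr_add2]
  abel

theorem sdTr_add3 (hg : IsLYA K g brg trg) (hh : IsLYA K h brh trh)
    (hρ : IsLYRep K g h brg trg ρ μ) (p q r r' : g × h) :
    sdTr brg trg trh ρ μ p q (r + r')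
      = sdTr brg trg trh ρ μ p q r + sdTr brg trg trh ρ μ p q r' := by
  refine Prod.ext (hg.tr_add3 _ _ _ _) ?_
  simp only [sdTr, Prod.fst_add, Prod.snd_add, hρ.dmap_add, hρ.μ_add2, hh.tr_add3]
  abel

theorem sdTr_smul1 (hg : IsLYA K g brg trg) (hh : IsLYA K h brh trh)
    (hρ : IsLYRep K g h brg trg ρ μ) (a : K) (p q r : g × h) :
    sdTr brg trg trh ρ μ (a • p) q r = a • sdTr brg trg trh ρ μ p q r := by
  refine Prod.ext (hg.tr_smul1 _ _ _ _) ?_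
  simp only [sdTr, Prod.smul_fst, Prod.smul_snd, hρ.dmap_smul_left hg, hρ.μ_smul1, hρ.μ_smulv,
    hh.tr_smul1, smul_add, smul_sub]

theorem sdTr_smul2 (hg : IsLYA K g brg trg) (hh : IsLYA K h brh trh)
    (hρ : IsLYRep K g h brg trg ρ μ) (a : K) (p q r : g × h) :
    sdTr brg trg trh ρ μ p (a • q) r = a • sdTr brg trg trh ρ μ p q r := by
  refine Prod.ext (hg.tr_smul2 _ _ _ _) ?_
  simp only [sdTr, Prod.smul_fst, Prod.smul_snd, hρ.dmap_smul_right hg, hρ.μ_smul1, hρ.μ_smulv,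
    hh.tr_smul2, smul_add, smul_sub]

theorem sdTr_smul3 (hg : IsLYA K g brg trg) (hh : IsLYA K h brh trh)
    (hρ : IsLYRep K g h brg trg ρ μ) (a : K) (p q r : g × h) :
    sdTr brg trg trh ρ μ p q (a • r) = a • sdTr brg trg trh ρ μ p q r := by
  refine Prod.ext (hg.tr_smul3 _ _ _ _) ?_
  simp only [sdTr, Prod.smul_fst, Prod.smul_snd, hρ.dmap_smul, hρ.μ_smul2, hh.tr_smul3,
    smul_add, smul_sub]

theorem sdBr_skew (hg : IsLYA K g brg trg) (hh : IsLYA K h brh trh) (p q : g × h) :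
    sdBr brg brh ρ p q = -sdBr brg brh ρ q p := by
  refine Prod.ext (hg.br_skew _ _) ?_
  simp only [sdBr, Prod.snd_neg, hh.br_skew p.2 q.2]
  abel

theorem sdTr_skew (hg : IsLYA K g brg trg) (hh : IsLYA K h brh trh)
    (hρ : IsLYRep K g h brg trg ρ μ) (p q r : g × h) :
    sdTr brg trg trh ρ μ p q r = -sdTr brg trg trh ρ μ q p r := by
  refine Prod.ext (hg.tr_skew _ _ _) ?_
  simp only [sdTr, Prod.snd_neg, hρ.dmap_swap hg q.1, hh.tr_skew p.2 q.2]
  abel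

theorem sdBr_sdBr_left_snd (hh : IsLYA K h brh trh)
    (hact : IsLYAction K g h brg trg brh trh ρ μ) (x y z : g) (u v w : h) :
    (sdBr brg brh ρ (sdBr brg brh ρ (x, u) (y, v)) (z, w)).2
      = ρ (brg x y) w - ρ z (ρ x v) + ρ z (ρ y u) + brh (brh u v) w := by
  simp only [sdBr, hact.rep.ρ_addv, hact.rep.ρ_subv, hact.ρ_ann_br, hh.br_add_left,
    hh.br_sub_left, hact.ρ_cent_br]
  abel

theorem sdTr_sdBr_left_snd (hh : IsLYA K h brh trh)
    (hact : IsLYAction K g h brg trg brh trh ρ μ) (x y z t : g) (u v w m : h) :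
    (sdTr brg trg trh ρ μ (sdBr brg brh ρ (x, u) (y, v)) (z, w) (t, m)).2
      = Dmap brg ρ μ (brg x y) z m + μ z t (ρ x v) - μ z t (ρ y u) - μ (brg x y) t w
        + trh (brh u v) w m := by
  simp only [sdBr, sdTr, hact.rep.μ_addv, hact.rep.μ_subv, hact.μ_ann_br, hh.tr_add1,
    hh.tr_sub1, hact.ρ_cent_tr1]
  abel

theorem sdTr_sdBr_right_snd (hh : IsLYA K h brh trh)
    (hact : IsLYAction K g h brg trg brh trh ρ μ) (x y z t : g) (u v w m : h) :
    (sdTr brg trg trh ρ μ (x, u) (y, v) (sdBr brg brh ρ (z, w) (t, m))).2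
      = Dmap brg ρ μ x y (ρ z m) - Dmap brg ρ μ x y (ρ t w) + μ y (brg z t) u
        - μ x (brg z t) v + trh u v (brh w m) := by
  simp only [sdBr, sdTr, hact.rep.dmap_add, hact.rep.dmap_sub, hact.dmap_ann_br, hh.tr_add3,
    hh.tr_sub3, hact.ρ_cent_tr3]
  abel

theorem sdBr_sdTr_left_snd (hh : IsLYA K h brh trh)
    (hact : IsLYAction K g h brg trg brh trh ρ μ) (x y z t : g) (u v w m : h) :
    (sdBr brg brh ρ (sdTr brg trg trh ρ μ (x, u) (y, v) (z, w)) (t, m)).2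
      = ρ (trg x y z) m - ρ t (Dmap brg ρ μ x y w) - ρ t (μ y z u) + ρ t (μ x z v)
        + brh (trh u v w) m := by
  simp only [sdBr, sdTr, Dmap, hact.rep.ρ_addv, hact.rep.ρ_subv, hact.ρ_ann_tr, hh.br_add_left,
    hh.br_sub_left, hact.ρ_cent_br, hact.μ_cent_br]
  abel

theorem sdBr_sdTr_right_snd (hh : IsLYA K h brh trh)
    (hact : IsLYAction K g h brg trg brh trh ρ μ) (x y z t : g) (u v w m : h) :
    (sdBr brg brh ρ (z, w) (sdTr brg trg trh ρ μ (x, u) (y, v) (t, m))).2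
      = ρ z (Dmap brg ρ μ x y m) + ρ z (μ y t u) - ρ z (μ x t v) - ρ (trg x y t) w
        + brh w (trh u v m) := by
  simp only [sdBr, sdTr, Dmap, hact.rep.ρ_addv, hact.rep.ρ_subv, hact.ρ_ann_tr, hh.br_add_right,
    hh.br_sub_right, hact.ρ_cent_br_right hh, hact.μ_cent_br_right hh]
  abel

theorem sdTr_sdTr_left_snd (hh : IsLYA K h brh trh)
    (hact : IsLYAction K g h brg trg brh trh ρ μ) (x y z t c : g) (u v w m n : h) :
    (sdTr brg trg trh ρ μ (sdTr brg trg trh ρ μ (x, u) (y, v) (z, w)) (t, m) (c, n)).2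
      = Dmap brg ρ μ (trg x y z) t n + μ t c (Dmap brg ρ μ x y w) + μ t c (μ y z u)
        - μ t c (μ x z v) - μ (trg x y z) c m + trh (trh u v w) m n := by
  simp only [sdTr, Dmap, hact.rep.μ_addv, hact.rep.μ_subv, hact.μ_ann_tr, hh.tr_add1,
    hh.tr_sub1, hact.ρ_cent_tr1, hact.μ_cent_tr1]
  abel

theorem sdTr_sdTr_mid_snd (hh : IsLYA K h brh trh)
    (hact : IsLYAction K g h brg trg brh trh ρ μ) (x y z t c : g) (u v w m n : h) :
    (sdTr brg trg trh ρ μ (z, w) (sdTr brg trg trh ρ μ (x, u) (y, v) (t, m)) (c, n)).2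
      = Dmap brg ρ μ z (trg x y t) n + μ (trg x y t) c w - μ z c (Dmap brg ρ μ x y m)
        - μ z c (μ y t u) + μ z c (μ x t v) + trh w (trh u v m) n := by
  simp only [sdTr, Dmap, hact.rep.μ_addv, hact.rep.μ_subv, hact.μ_ann_tr, hh.tr_add2,
    hh.tr_sub2, hact.ρ_cent_tr2 hh, hact.μ_cent_tr2 hh]
  abel

theorem sdTr_sdTr_right_snd (hh : IsLYA K h brh trh)
    (hact : IsLYAction K g h brg trg brh trh ρ μ) (x y z t c : g) (u v w m n : h) :
    (sdTr brg trg trh ρ μ (z, w) (t, m) (sdTr brg trg trh ρ μ (x, u) (y, v) (c, n))).2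
      = Dmap brg ρ μ z t (Dmap brg ρ μ x y n) + Dmap brg ρ μ z t (μ y c u)
        - Dmap brg ρ μ z t (μ x c v) + μ t (trg x y c) w - μ z (trg x y c) m
        + trh w m (trh u v n) := by
  simp only [sdTr, Dmap, hact.rep.ρ_addv, hact.rep.ρ_subv, hact.rep.μ_addv, hact.rep.μ_subv,
    hact.ρ_ann_tr, hact.μ_ann_tr, hact.rep.ρ_zerov, hh.tr_add3, hh.tr_sub3, hact.ρ_cent_tr3,
    hact.μ_cent_tr3]
  abel

theorem sd_ly1 (hg : IsLYA K g brg trg) (hh : IsLYA K h brh trh)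
    (hact : IsLYAction K g h brg trg brh trh ρ μ) (p q r : g × h) :
    sdBr brg brh ρ (sdBr brg brh ρ p q) r + sdBr brg brh ρ (sdBr brg brh ρ q r) p
      + sdBr brg brh ρ (sdBr brg brh ρ r p) q + sdTr brg trg trh ρ μ p q r
      + sdTr brg trg trh ρ μ q r p + sdTr brg trg trh ρ μ r p q = 0 := by
  rcases p with ⟨x, u⟩; rcases q with ⟨y, v⟩; rcases r with ⟨z, w⟩
  refine Prod.ext (hg.ly1 x y z) ?_
  simp only [Prod.snd_add, Prod.snd_zero, sdBr_sdBr_left_snd hh hact]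
  linear_combination (norm := skip) hh.ly1 u v w
  simp only [sdTr, Dmap]
  abel

theorem sd_ly2 (hg : IsLYA K g brg trg) (hh : IsLYA K h brh trh)
    (hact : IsLYAction K g h brg trg brh trh ρ μ) (p q r s : g × h) :
    sdTr brg trg trh ρ μ (sdBr brg brh ρ p q) r s + sdTr brg trg trh ρ μ (sdBr brg brh ρ q r) p s
      + sdTr brg trg trh ρ μ (sdBr brg brh ρ r p) q s = 0 := by
  rcases p with ⟨x, u⟩; rcases q with ⟨y, v⟩; rcases r with ⟨z, w⟩; rcases s with ⟨t, m⟩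
  refine Prod.ext (hg.ly2 x y z t) ?_
  have hrep := hact.rep
  simp only [Prod.snd_add, Prod.snd_zero, sdTr_sdBr_left_snd hh hact]
  linear_combination (norm := skip)
    hrep.rep2 z x y m + hrep.rep2 x y z m + hrep.rep2 y z x m
      - hrep.rep1 x y z m - hrep.rep1 y z x m - hrep.rep1 z x y m
      - hrep.rep1 x y t w - hrep.rep1 y z t u - hrep.rep1 z x t v
      - congrArg (ρ · m) (hg.ly1 x y z)
      + hrep.rep3 x y z m + hrep.rep3 y z x m + hrep.rep3 z x y m + hh.ly2 u v w m
  simp only [Dmap, hrep.ρ_add, hrep.ρ_zero, hrep.ρ_addv, hrep.ρ_subv]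
  abel

theorem sd_ly3 (hg : IsLYA K g brg trg) (hh : IsLYA K h brh trh)
    (hact : IsLYAction K g h brg trg brh trh ρ μ) (p q r s : g × h) :
    sdTr brg trg trh ρ μ p q (sdBr brg brh ρ r s)
      = sdBr brg brh ρ (sdTr brg trg trh ρ μ p q r) s
        + sdBr brg brh ρ r (sdTr brg trg trh ρ μ p q s) := by
  rcases p with ⟨x, u⟩; rcases q with ⟨y, v⟩; rcases r with ⟨z, w⟩; rcases s with ⟨t, m⟩
  refine Prod.ext (hg.ly3 x y z t) ?_
  have hrep := hact.rep
  simp only [Prod.snd_add, sdTr_sdBr_right_snd hh hact, sdBr_sdTr_left_snd hh hact,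
    sdBr_sdTr_right_snd hh hact]
  linear_combination (norm := skip)
    - hrep.rep3 x y z m + hrep.rep3 x y t w + hrep.rep2 y z t u - hrep.rep2 x z t v
      + hh.ly3 u v w m
  simp only [Dmap, hrep.ρ_addv, hrep.ρ_subv]
  abel

theorem sd_ly4 (hg : IsLYA K g brg trg) (hh : IsLYA K h brh trh)
    (hact : IsLYAction K g h brg trg brh trh ρ μ) (p q r s k : g × h) :
    sdTr brg trg trh ρ μ p q (sdTr brg trg trh ρ μ r s k)
      = sdTr brg trg trh ρ μ (sdTr brg trg trh ρ μ p q r) s k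
        + sdTr brg trg trh ρ μ r (sdTr brg trg trh ρ μ p q s) k
        + sdTr brg trg trh ρ μ r s (sdTr brg trg trh ρ μ p q k) := by
  rcases p with ⟨x, u⟩; rcases q with ⟨y, v⟩; rcases r with ⟨z, w⟩; rcases s with ⟨t, m⟩
  rcases k with ⟨c, n⟩
  refine Prod.ext (hg.ly4 x y z t c) ?_
  have hrep := hact.rep
  simp only [Prod.snd_add, sdTr_sdTr_left_snd hh hact, sdTr_sdTr_mid_snd hh hact,
    sdTr_sdTr_right_snd hh hact]
  linear_combination (norm := skip)
    - hrep.rep5 x y t z n + hrep.rep5 x y z t n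
      - hrep.rep3 x y z (ρ t n) + congrArg (ρ t) (hrep.rep3 x y z n)
      - congrArg (ρ z) (hrep.rep3 x y t n) + hrep.rep3 x y t (ρ z n)
      - congrArg (ρ · n) (hg.ly3 x y z t) + hrep.rep3 x y (brg z t) n
      - hrep.rep5 x y t c w + hrep.rep5 x y z c m
      - hrep.rep4 y z t c u + hrep.rep4 x z t c v + hh.ly4 u v w m n
  simp only [Dmap, hrep.ρ_add, hrep.ρ_addv, hrep.ρ_subv, hrep.μ_addv, hrep.μ_subv]
  abel

end Semidirect

end

/-- the semidirect product `g ⋉_{ρ,μ} h` of an action is a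
Lie-Yamaguti algebra. -/
theorem semidirect_product_isLYA (K : Type*) [Field K]
    (g : Type*) [AddCommGroup g] [Module K g] (h : Type*) [AddCommGroup h] [Module K h]
    (brg : g → g → g) (trg : g → g → g → g) (brh : h → h → h) (trh : h → h → h → h)
    (ρ : g → h → h) (μ : g → g → h → h)
    (hg : IsLYA K g brg trg) (hh : IsLYA K h brh trh)
    (hact : IsLYAction K g h brg trg brh trh ρ μ) :
    IsLYA K (g × h) (sdBr brg brh ρ) (sdTr brg trg trh ρ μ) :=
  { br_add_left := sdBr_add_left hg hh hact.rep
    br_smul_left := sdBr_smul_left hg hh hact.rep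
    br_add_right := sdBr_add_right hg hh hact.rep
    br_smul_right := sdBr_smul_right hg hh hact.rep
    tr_add1 := sdTr_add1 hg hh hact.rep
    tr_smul1 := sdTr_smul1 hg hh hact.rep
    tr_add2 := sdTr_add2 hg hh hact.rep
    tr_smul2 := sdTr_smul2 hg hh hact.rep
    tr_add3 := sdTr_add3 hg hh hact.rep
    tr_smul3 := sdTr_smul3 hg hh hact.rep
    br_skew := sdBr_skew hg hh
    tr_skew := sdTr_skew hg hh hact.rep
    ly1 := sd_ly1 hg hh hact
    ly2 := sd_ly2 hg hh hact
    ly3 := sd_ly3 hg hh hact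
    ly4 := sd_ly4 hg hh hact }
end

section
/- Let (ρ,μ) be an action of a Lie-Yamaguti algebra g on a Lie-Yamaguti algebra h. A linear map T: h → g is a relative Rota-Baxter operator of weight 1 if and only if the graph Gr(T) = {Tu + u : u ∈ h} is a subalgebra of the semidirect product Lie-Yamaguti algebra g ⋉_{ρ,μ} h. -/
section Graph

variable {g h : Type*}

theorem mk_mem_range_graph_iff (f : h → g) (x : g) (u : h) :
    (x, u) ∈ Set.range (fun v : h => (f v, v)) ↔ x = f u := by
  constructor
  · rintro ⟨v, hv⟩
    obtain ⟨rfl, rfl⟩ := Prod.mk.inj hv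
    rfl
  · rintro rfl
    exact ⟨u, rfl⟩

variable [AddCommGroup g] [AddCommGroup h]

theorem graph_closed_sdBr_iff (brg : g → g → g) (brh : h → h → h) (ρ : g → h → h)
    (f : h → g) :
    (∀ p q : g × h, p ∈ Set.range (fun u : h => (f u, u)) →
        q ∈ Set.range (fun u : h => (f u, u)) →
        sdBr brg brh ρ p q ∈ Set.range (fun u : h => (f u, u))) ↔
      ∀ u v : h, brg (f u) (f v) = f (ρ (f u) v - ρ (f v) u + brh u v) := by
  constructor
  · intro hclosed u v
    exact (mk_mem_range_graph_iff f _ _).1 (hclosed _ _ ⟨u, rfl⟩ ⟨v, rfl⟩)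
  · rintro hrb _ _ ⟨u, rfl⟩ ⟨v, rfl⟩
    exact (mk_mem_range_graph_iff f _ _).2 (hrb u v)

theorem graph_closed_sdTr_iff (brg : g → g → g) (trg : g → g → g → g)
    (trh : h → h → h → h) (ρ : g → h → h) (μ : g → g → h → h) (f : h → g) :
    (∀ p q r : g × h, p ∈ Set.range (fun u : h => (f u, u)) →
        q ∈ Set.range (fun u : h => (f u, u)) →
        r ∈ Set.range (fun u : h => (f u, u)) →
        sdTr brg trg trh ρ μ p q r ∈ Set.range (fun u : h => (f u, u))) ↔
      ∀ u v w : h, trg (f u) (f v) (f w)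
        = f (Dmap brg ρ μ (f u) (f v) w + μ (f v) (f w) u - μ (f u) (f w) v + trh u v w) := by
  constructor
  · intro hclosed u v w
    exact (mk_mem_range_graph_iff f _ _).1 (hclosed _ _ _ ⟨u, rfl⟩ ⟨v, rfl⟩ ⟨w, rfl⟩)
  · rintro hrb _ _ _ ⟨u, rfl⟩ ⟨v, rfl⟩ ⟨w, rfl⟩
    exact (mk_mem_range_graph_iff f _ _).2 (hrb u v w)

end Graph

theorem relRB_iff_graph_subalgebra_general (K : Type*) [Field K]
    (g : Type*) [AddCommGroup g] [Module K g] (h : Type*) [AddCommGroup h] [Module K h]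
    (brg : g → g → g) (trg : g → g → g → g) (brh : h → h → h) (trh : h → h → h → h)
    (ρ : g → h → h) (μ : g → g → h → h)
    (T : h →ₗ[K] g) :
    IsRelRB K brg trg brh trh ρ μ T ↔
      ((∀ p q : g × h, p ∈ Set.range (fun u : h => (T u, u)) →
          q ∈ Set.range (fun u : h => (T u, u)) →
          sdBr brg brh ρ p q ∈ Set.range (fun u : h => (T u, u))) ∧
        (∀ p q r : g × h, p ∈ Set.range (fun u : h => (T u, u)) →
          q ∈ Set.range (fun u : h => (T u, u)) →
          r ∈ Set.range (fun u : h => (T u, u)) →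
          sdTr brg trg trh ρ μ p q r ∈ Set.range (fun u : h => (T u, u)))) :=
  and_congr (graph_closed_sdBr_iff brg brh ρ T).symm
    (graph_closed_sdTr_iff brg trg trh ρ μ T).symm

/-- `T` is a relative Rota-Baxter operator of weight 1 iff its graph is a
subalgebra of the semidirect product `g ⋉_{ρ,μ} h`. -/
theorem relRB_iff_graph_subalgebra (K : Type*) [Field K]
    (g : Type*) [AddCommGroup g] [Module K g] (h : Type*) [AddCommGroup h] [Module K h]
    (brg : g → g → g) (trg : g → g → g → g) (brh : h → h → h) (trh : h → h → h → h)
    (ρ : g → h → h) (μ : g → g → h → h)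
    (hg : IsLYA K g brg trg) (hh : IsLYA K h brh trh)
    (hact : IsLYAction K g h brg trg brh trh ρ μ) (T : h →ₗ[K] g) :
    IsRelRB K brg trg brh trh ρ μ T ↔
      ((∀ p q : g × h, p ∈ Set.range (fun u : h => (T u, u)) →
          q ∈ Set.range (fun u : h => (T u, u)) →
          sdBr brg brh ρ p q ∈ Set.range (fun u : h => (T u, u))) ∧
        (∀ p q r : g × h, p ∈ Set.range (fun u : h => (T u, u)) →
          q ∈ Set.range (fun u : h => (T u, u)) →
          r ∈ Set.range (fun u : h => (T u, u)) →
          sdTr brg trg trh ρ μ p q r ∈ Set.range (fun u : h => (T u, u)))) :=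
  relRB_iff_graph_subalgebra_general K g h brg trg brh trh ρ μ T
end

section
/- Let T, T' be relative Rota-Baxter operators of weight 1 from h to g with respect to an action (ρ,μ), and let (ψ_g,ψ_h) be a homomorphism from T' to T. Then ψ_g intertwines the induced representations: ψ_g ∘ ρ_{T'}(u) = ρ_T(ψ_h(u)) ∘ ψ_g and ψ_g ∘ μ_{T'}(u,v) = μ_T(ψ_h(u),ψ_h(v)) ∘ ψ_g for all u,v ∈ h. -/
section InducedRepresentations

variable {g h g' h' : Type*} [AddCommGroup h] [AddCommGroup h']

theorem map_Dmap {F : Type*} [FunLike F h h'] [AddMonoidHomClass F h h']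
    {brg : g → g → g} {ρ : g → h → h} {μ : g → g → h → h}
    {brg' : g' → g' → g'} {ρ' : g' → h' → h'} {μ' : g' → g' → h' → h'}
    (φ : g → g') (ψ : F)
    (hφ_br : ∀ x y, φ (brg x y) = brg' (φ x) (φ y))
    (hρ : ∀ x u, ψ (ρ x u) = ρ' (φ x) (ψ u))
    (hμ : ∀ x y u, ψ (μ x y u) = μ' (φ x) (φ y) (ψ u)) (x y : g) (v : h) :
    ψ (Dmap brg ρ μ x y v) = Dmap brg' ρ' μ' (φ x) (φ y) (ψ v) := by
  simp only [Dmap, map_sub, map_add, hρ, hμ, hφ_br]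

variable [AddCommGroup g] [AddCommGroup g'] {K : Type*} [Field K] [Module K g] [Module K h]
  [Module K g'] [Module K h']

theorem map_rhoT {F : Type*} [FunLike F g g'] [AddMonoidHomClass F g g']
    {brg : g → g → g} {ρ : g → h → h} {brg' : g' → g' → g'} {ρ' : g' → h' → h'}
    {T : h →ₗ[K] g} {T' : h' →ₗ[K] g'} (φ : F) (ψ : h → h')
    (hφ_br : ∀ x y, φ (brg x y) = brg' (φ x) (φ y))
    (hρ : ∀ x u, ψ (ρ x u) = ρ' (φ x) (ψ u))
    (hcomm : ∀ u, φ (T u) = T' (ψ u)) (u : h) (x : g) :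
    φ (rhoT brg ρ T u x) = rhoT brg' ρ' T' (ψ u) (φ x) := by
  simp only [rhoT, map_add, hφ_br, hcomm, hρ]

theorem map_muT {F G : Type*} [FunLike F g g'] [AddMonoidHomClass F g g']
    [FunLike G h h'] [AddMonoidHomClass G h h']
    {brg : g → g → g} {trg : g → g → g → g} {ρ : g → h → h} {μ : g → g → h → h}
    {brg' : g' → g' → g'} {trg' : g' → g' → g' → g'} {ρ' : g' → h' → h'}
    {μ' : g' → g' → h' → h'} {T : h →ₗ[K] g} {T' : h' →ₗ[K] g'} (φ : F) (ψ : G)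
    (hφ_br : ∀ x y, φ (brg x y) = brg' (φ x) (φ y))
    (hφ_tr : ∀ x y z, φ (trg x y z) = trg' (φ x) (φ y) (φ z))
    (hρ : ∀ x u, ψ (ρ x u) = ρ' (φ x) (ψ u))
    (hμ : ∀ x y u, ψ (μ x y u) = μ' (φ x) (φ y) (ψ u))
    (hcomm : ∀ u, φ (T u) = T' (ψ u)) (u v : h) (x : g) :
    φ (muT brg trg ρ μ T u v x) = muT brg' trg' ρ' μ' T' (ψ u) (ψ v) (φ x) := by
  simp only [muT, map_sub, hφ_tr, hcomm, map_Dmap φ ψ hφ_br hρ hμ, hμ]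

end InducedRepresentations

theorem hom_intertwines_induced_reps_general (K : Type*) [Field K]
    (g : Type*) [AddCommGroup g] [Module K g] (h : Type*) [AddCommGroup h] [Module K h]
    (brg : g → g → g) (trg : g → g → g → g)
    (ρ : g → h → h) (μ : g → g → h → h)
    (T T' : h →ₗ[K] g)
    (ψg : g →ₗ[K] g) (ψh : h →ₗ[K] h)
    (hψg_br : ∀ x y : g, ψg (brg x y) = brg (ψg x) (ψg y))
    (hψg_tr : ∀ x y z : g, ψg (trg x y z) = trg (ψg x) (ψg y) (ψg z))
    (hcomm : ∀ u : h, ψg (T' u) = T (ψh u))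
    (hρ : ∀ (x : g) (u : h), ψh (ρ x u) = ρ (ψg x) (ψh u))
    (hμ : ∀ (x y : g) (u : h), ψh (μ x y u) = μ (ψg x) (ψg y) (ψh u)) :
    (∀ (u : h) (x : g), ψg (rhoT brg ρ T' u x) = rhoT brg ρ T (ψh u) (ψg x)) ∧
    (∀ (u v : h) (x : g),
      ψg (muT brg trg ρ μ T' u v x) = muT brg trg ρ μ T (ψh u) (ψh v) (ψg x)) :=
  ⟨map_rhoT ψg ψh hψg_br hρ hcomm, map_muT ψg ψh hψg_br hψg_tr hρ hμ hcomm⟩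

/-- a homomorphism `(ψg, ψh)` from `T'` to `T` intertwines the induced
representations: `ψg ∘ ρ_{T'}(u) = ρ_T(ψh u) ∘ ψg` and
`ψg ∘ μ_{T'}(u,v) = μ_T(ψh u, ψh v) ∘ ψg`. -/
theorem hom_intertwines_induced_reps (K : Type*) [Field K]
    (g : Type*) [AddCommGroup g] [Module K g] (h : Type*) [AddCommGroup h] [Module K h]
    (brg : g → g → g) (trg : g → g → g → g) (brh : h → h → h) (trh : h → h → h → h)
    (ρ : g → h → h) (μ : g → g → h → h)
    (hg : IsLYA K g brg trg) (hh : IsLYA K h brh trh)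
    (hact : IsLYAction K g h brg trg brh trh ρ μ)
    (T T' : h →ₗ[K] g)
    (hT : IsRelRB K brg trg brh trh ρ μ T) (hT' : IsRelRB K brg trg brh trh ρ μ T')
    (ψg : g →ₗ[K] g) (ψh : h →ₗ[K] h)
    (hψg_br : ∀ x y : g, ψg (brg x y) = brg (ψg x) (ψg y))
    (hψg_tr : ∀ x y z : g, ψg (trg x y z) = trg (ψg x) (ψg y) (ψg z))
    (hψh_br : ∀ u v : h, ψh (brh u v) = brh (ψh u) (ψh v))
    (hψh_tr : ∀ u v w : h, ψh (trh u v w) = trh (ψh u) (ψh v) (ψh w))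
    (hcomm : ∀ u : h, ψg (T' u) = T (ψh u))
    (hρ : ∀ (x : g) (u : h), ψh (ρ x u) = ρ (ψg x) (ψh u))
    (hμ : ∀ (x y : g) (u : h), ψh (μ x y u) = μ (ψg x) (ψg y) (ψh u)) :
    (∀ (u : h) (x : g), ψg (rhoT brg ρ T' u x) = rhoT brg ρ T (ψh u) (ψg x)) ∧
    (∀ (u v : h) (x : g),
      ψg (muT brg trg ρ μ T' u v x) = muT brg trg ρ μ T (ψh u) (ψh v) (ψg x)) :=
  hom_intertwines_induced_reps_general K g h brg trg ρ μ T T' ψg ψh hψg_br hψg_tr hcomm hρ hμ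
end
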